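/- arXiv:1302.4921 — 4 statements merged into one kernel-verified Lean document; each statement's English description precedes it below -/
import Mathlib

section
/- For a nonzero parameter a and natural number n, define the Poisson–Charlier polynomial Cₙ(x;a) = ∑_{k=0}^{n} C(n,k) (-1)^{n-k} a^{-k} (x)_k, where (x)_k is the falling factorial. Then as formal power series in t, ∑_{l≥0} Cₙ(l;a) t^l/l! = e^t · ((t-a)/a)^n. -/
open PowerSeries Nat

noncomputable section

/-- The exponential series `e^t ∈ ℚ[[t]]`. -/
def expS : PowerSeries ℚ := PowerSeries.exp ℚ

/-- `log(1+t) = ∑_{k≥1} (-1)^{k+1} t^k / k`. -/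
def logS : PowerSeries ℚ := PowerSeries.mk fun k => if k = 0 then 0 else (-1 : ℚ)^(k+1) / k

/-- `log(1+t)/t = ∑_{k≥0} (-1)^k t^k/(k+1)`. -/
def LtS : PowerSeries ℚ := PowerSeries.mk fun k => (-1 : ℚ)^k / (k+1)

/-- `(e^{bt} - 1)/t`. -/
def ebt (b : ℚ) : PowerSeries ℚ := PowerSeries.mk fun m => b^(m+1) / (m+1)!

/-- Falling factorial `(x)_m = x(x-1)⋯(x-m+1)`. -/
def ff (x : ℚ) (m : ℕ) : ℚ := ∏ i ∈ Finset.range m, (x - i)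

/-- `(1+t)^x = ∑_m (x)_m t^m/m!`. -/
def onePlusPow (x : ℚ) : PowerSeries ℚ := PowerSeries.mk fun m => ff x m / m !

/-- Integer powers of a power series (negative powers via `PowerSeries.inv`). -/
def zp (f : PowerSeries ℚ) : ℤ → PowerSeries ℚ
  | Int.ofNat n => f ^ n
  | Int.negSucc n => f⁻¹ ^ (n + 1)

/-- Stirling numbers of the second kind. -/
def S2 : ℕ → ℕ → ℕ
  | 0, 0 => 1
  | 0, _ + 1 => 0
  | _ + 1, 0 => 0
  | n + 1, k + 1 => (k + 1) * S2 n (k + 1) + S2 n k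

/-- Signed Stirling numbers of the first kind: `(x)_n = ∑_l S1 n l • x^l`. -/
def S1 : ℕ → ℕ → ℤ
  | 0, 0 => 1
  | 0, _ + 1 => 0
  | _ + 1, 0 => 0
  | n + 1, k + 1 => S1 n k - n * S1 n (k + 1)

/-- Bernoulli polynomial of (integer) order `a` evaluated at `x`:
`(t/(e^t-1))^a e^{xt} = ∑_m Bpol a x m • t^m/m!`. -/
def Bpol (a : ℤ) (x : ℚ) (m : ℕ) : ℚ :=
  m ! * PowerSeries.coeff (R := ℚ) m (zp (ebt 1)⁻¹ a * PowerSeries.rescale x expS)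

/-- Bernoulli numbers of order `a`. -/
def Bnum (a : ℤ) (m : ℕ) : ℚ := Bpol a 0 m

/-- Narumi numbers: `(log(1+t)/t)^n = ∑_l Nnum n l • t^l/l!`. -/
def Nnum (n l : ℕ) : ℚ := l ! * PowerSeries.coeff (R := ℚ) l (LtS ^ n)

/-- Narumi polynomials of (integer) order `a`:
`(log(1+t)/t)^a (1+t)^x = ∑_l Npol a x l • t^l/l!`. -/
def Npol (a : ℤ) (x : ℚ) (l : ℕ) : ℚ :=
  l ! * PowerSeries.coeff (R := ℚ) l (zp LtS a * onePlusPow x)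

/-- Bernoulli polynomials of the second kind:
`t(1+t)^x/log(1+t) = ∑_m b2 x m • t^m/m!`. -/
def b2 (x : ℚ) (m : ℕ) : ℚ := m ! * PowerSeries.coeff (R := ℚ) m (onePlusPow x * LtS⁻¹)

/-- Poisson–Charlier polynomial `C_n(x;a)`. -/
def PC (n : ℕ) (x a : ℚ) : ℚ :=
  ∑ k ∈ Finset.range (n + 1), (n.choose k : ℚ) * (-1)^(n - k) * (a⁻¹)^k * ff x k

/-- Generalized binomial coefficient `C(x, m) = (x)_m/m!`. -/
def gchoose (x : ℚ) (m : ℕ) : ℚ := ff x m / m !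

/-- Action of a power series `f(t) = ∑ a_k t^k/k!` on a polynomial:
`f(t) p(x) = ∑_k a_k p^{(k)}(x)/k!` (a finite sum). -/
def act (f : PowerSeries ℚ) (p : Polynomial ℚ) : Polynomial ℚ :=
  ∑ k ∈ Finset.range (p.natDegree + 1),
    PowerSeries.coeff (R := ℚ) k f • (⇑Polynomial.derivative)^[k] p

/-- `e^{xt} ∈ (ℚ[x])[[t]]`. -/
def expPoly : PowerSeries (Polynomial ℚ) :=
  PowerSeries.mk fun k => ((k ! : ℚ)⁻¹) • Polynomial.X ^ k

/-- The Sheffer polynomial sequence attached to an invertible series `f`: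
`f(t) e^{xt} = ∑_n (polyOf f n) t^n/n!`. -/
def polyOf (f : PowerSeries ℚ) (n : ℕ) : Polynomial ℚ :=
  (n ! : ℚ) • PowerSeries.coeff (R := Polynomial ℚ) n (PowerSeries.map Polynomial.C f * expPoly)

/-- `((1-λ)/(e^t-λ))^α`. -/
def FEser (lam : ℚ) (α : ℕ) : PowerSeries ℚ :=
  (PowerSeries.C (R := ℚ) (1 - lam) * (expS - PowerSeries.C (R := ℚ) lam)⁻¹) ^ α

/-- Frobenius–Euler polynomials of order `α`. -/
def FE (lam : ℚ) (α n : ℕ) : Polynomial ℚ := polyOf (FEser lam α) n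

/-- `(2/(e^t+1))^α`. -/
def Eser (α : ℕ) : PowerSeries ℚ := (PowerSeries.C (R := ℚ) 2 * (expS + 1)⁻¹) ^ α

/-- Euler polynomials of order `α`. -/
def Epol (α n : ℕ) : Polynomial ℚ := polyOf (Eser α) n

/-- `((1-λ)/(e^{(λ-1)t}-λ))^α`. -/
def Aser (lam : ℚ) (α : ℕ) : PowerSeries ℚ :=
  (PowerSeries.C (R := ℚ) (1 - lam) *
    (PowerSeries.rescale (lam - 1) expS - PowerSeries.C (R := ℚ) lam)⁻¹) ^ α

/-- Frobenius-type Eulerian polynomials of order `α`. -/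
def Apol (lam : ℚ) (α n : ℕ) : Polynomial ℚ := polyOf (Aser lam α) n

end

/-!
Since `(t - a)/a = t/a - 1`, the binomial theorem writes `e^t ((t - a)/a)^n` as
`∑_k C(n,k) (-1)^(n-k) a^(-k) e^t t^k`, and `e^t t^k = ∑_l (l)_k t^l / l!`
because `1/(l-k)! = (l)_k / l!`. Comparing coefficients of `t^l` gives exactly `Cₙ(l;a)/l!`.
-/

lemma ff_natCast (l k : ℕ) : ff l k = l.descFactorial k := by
  rw [ff, ← descPochhammer_eval_eq_prod_range, descPochhammer_eval_eq_descFactorial]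

lemma coeff_exp_mul_X_pow (k l : ℕ) :
    coeff l (exp ℚ * X ^ k : ℚ⟦X⟧) = l.descFactorial k / l ! := by
  rw [coeff_mul_X_pow', coeff_exp]
  split_ifs with hkl
  · have hfac : ((l - k)! : ℚ) * l.descFactorial k = l ! := by
      exact_mod_cast Nat.factorial_mul_descFactorial hkl
    rw [Algebra.algebraMap_self, RingHom.id_apply, eq_div_iff (by positivity), ← hfac]
    field_simp
  · rw [Nat.descFactorial_eq_zero_iff_lt.mpr (not_le.mp hkl)]
    simp

theorem stmt2 (a : ℚ) (ha : a ≠ 0) (n : ℕ) :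
    PowerSeries.mk (fun l => PC n (l : ℚ) a / l !) =
      expS * ((PowerSeries.X - PowerSeries.C (R := ℚ) a) * PowerSeries.C (R := ℚ) a⁻¹) ^ n := by
  have hbase : (X - C a) * C a⁻¹ = C a⁻¹ * X + (-1 : ℚ⟦X⟧) := by
    rw [sub_mul, ← map_mul, mul_inv_cancel₀ ha, map_one]
    ring
  ext l
  rw [hbase, add_pow, Finset.mul_sum, map_sum, coeff_mk, PC, Finset.sum_div]
  refine Finset.sum_congr rfl fun k _ => ?_
  have hterm : expS * ((C a⁻¹ * X) ^ k * (-1) ^ (n - k) * (n.choose k : ℚ⟦X⟧)) =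
      C ((n.choose k : ℚ) * (-1) ^ (n - k) * a⁻¹ ^ k) * (exp ℚ * X ^ k) := by
    simp only [expS, mul_pow, map_mul, map_pow, map_natCast, map_neg, map_one]
    ring
  rw [hterm, coeff_C_mul, coeff_exp_mul_X_pow, ff_natCast, mul_div_assoc]
end

section
/- For every integer n ≥ 1, the formal power series (log(1+t)/t)^n equals n · ∑_{l≥0} (B_l^{(n+l)}/(n+l)) · t^l/l!, where B_l^{(m)} denotes the l-th Bernoulli number of order m (i.e., B_l^{(m)} = B_l^{(m)}(0) with (t/(e^t-1))^m e^{xt} = ∑ B_l^{(m)}(x) t^l/l!). -/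
open PowerSeries Nat

/-!
Write `L = log(1+t)/t` and `H = t/(e^t - 1) = (ebt 1)⁻¹`. Both satisfy first-order differential
equations: `(1 + t) (t L)' = 1`, and `t H' = (1 - t) H - H²` (differentiate `t H⁻¹ = e^t - 1`).
Taking coefficients in the corresponding equations for the powers `L^(n+1)` and `H^(k+1)` shows
that the arrays `(n + l) [t^l] L^n` and `n [t^l] H^(n+l)` satisfy one and the same recurrence with
the same boundary values, hence coincide. This is Lagrange inversion for the inverse pair
`log(1+t)`, `e^t - 1`.
-/

namespace PowerSeries

variable {R : Type*}

theorem coeff_X_mul_derivative [CommSemiring R] (f : R⟦X⟧) (n : ℕ) :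
    coeff n (X * d⁄dX R f) = n * coeff n f := by
  rcases n with _ | n
  · simp
  · rw [coeff_succ_X_mul, coeff_derivative, mul_comm]
    push_cast
    rfl

theorem one_add_X_mul_mk_neg_one_pow [CommRing R] :
    (1 + X) * mk (fun n => (-1 : R) ^ n) = 1 := by
  simpa [rescale_mk, mul_comm, sub_eq_add_neg] using
    congrArg (rescale (-1 : R)) (mk_one_mul_one_sub_eq_one (S := R))

theorem coeff_natCast_mul [CommSemiring R] (k : ℕ) (f : R⟦X⟧) (n : ℕ) :
    coeff n ((k : R⟦X⟧) * f) = k * coeff n f := by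
  rw [← map_natCast C, coeff_C_mul]

theorem coeff_X_mul_derivative_add_natCast_mul [CommSemiring R] (f : R⟦X⟧) (k n : ℕ) :
    coeff n (X * d⁄dX R f + (k : R⟦X⟧) * f) = (n + k) * coeff n f := by
  rw [map_add, coeff_X_mul_derivative, coeff_natCast_mul, add_mul]

theorem X_mul_derivative_pow [CommSemiring R] (f : R⟦X⟧) (k : ℕ) :
    X * d⁄dX R (f ^ (k + 1)) = ((k + 1 : ℕ) : R⟦X⟧) * f ^ k * (X * d⁄dX R f) := by
  rw [derivative_pow, Nat.add_sub_cancel]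
  ring

end PowerSeries

open PowerSeries

theorem X_mul_LtS : X * LtS = log ℚ := by
  ext n
  rcases n with _ | n
  · simp
  · rw [coeff_succ_X_mul, LtS, coeff_mk, coeff_log, if_neg n.succ_ne_zero]
    simp [pow_succ]

theorem X_mul_ebt_one : X * ebt 1 = exp ℚ - 1 := by
  ext n
  rcases n with _ | n
  · simp
  · rw [coeff_succ_X_mul, ebt, coeff_mk, map_sub, coeff_exp, coeff_one, if_neg n.succ_ne_zero]
    simp

theorem constantCoeff_LtS : constantCoeff LtS = 1 := by
  simp [← coeff_zero_eq_constantCoeff_apply, LtS]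

theorem constantCoeff_ebt_one : constantCoeff (ebt 1) = 1 := by
  simp [← coeff_zero_eq_constantCoeff_apply, ebt]

theorem one_add_X_mul_derivative_X_mul_LtS : (1 + X) * d⁄dX ℚ (X * LtS) = 1 := by
  simpa [X_mul_LtS, deriv_log] using one_add_X_mul_mk_neg_one_pow (R := ℚ)

theorem X_mul_derivative_inv_ebt_one :
    X * d⁄dX ℚ (ebt 1)⁻¹ = (1 - X) * (ebt 1)⁻¹ - (ebt 1)⁻¹ ^ 2 := by
  have hinv : (ebt 1)⁻¹ * ebt 1 = 1 := PowerSeries.inv_mul_cancel _ (by simp [constantCoeff_ebt_one])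
  have hder := (d⁄dX ℚ).leibniz X (ebt 1)
  simp only [X_mul_ebt_one, map_sub, derivative_exp, derivative_one, sub_zero, derivative_X,
    smul_eq_mul, mul_one] at hder
  rw [derivative_inv']
  linear_combination (ebt 1)⁻¹ ^ 2 * hder + (ebt 1)⁻¹ ^ 2 * X_mul_ebt_one + ((1 - X) * (ebt 1)⁻¹) * hinv

theorem one_add_X_mul_X_mul_derivative_LtS_pow_add (n : ℕ) :
    (1 + X) * (X * d⁄dX ℚ (LtS ^ (n + 1)) + ((n + 1 : ℕ) : ℚ⟦X⟧) * LtS ^ (n + 1)) =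
      ((n + 1 : ℕ) : ℚ⟦X⟧) * LtS ^ n := by
  have h := one_add_X_mul_derivative_X_mul_LtS
  rw [Derivation.leibniz, derivative_X, smul_eq_mul, smul_eq_mul] at h
  rw [X_mul_derivative_pow]
  linear_combination (((n + 1 : ℕ) : ℚ⟦X⟧) * LtS ^ n) * h

theorem X_mul_derivative_inv_ebt_one_pow (k : ℕ) :
    X * d⁄dX ℚ ((ebt 1)⁻¹ ^ (k + 1)) =
      ((k + 1 : ℕ) : ℚ⟦X⟧) * ((1 - X) * (ebt 1)⁻¹ ^ (k + 1) - (ebt 1)⁻¹ ^ (k + 2)) := by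
  rw [X_mul_derivative_pow, X_mul_derivative_inv_ebt_one]
  ring

structure SatisfiesNarumiRecurrence (u : ℕ → ℕ → ℚ) : Prop where
  zero_left : ∀ l, u 0 l = 0
  zero_right : ∀ n, u n 0 = n
  succ_succ : ∀ n j : ℕ, (n + j + 1 : ℚ) * (u (n + 1) (j + 1) + u (n + 1) j) = (n + 1) * u n (j + 1)

theorem SatisfiesNarumiRecurrence.unique {u v : ℕ → ℕ → ℚ} (hu : SatisfiesNarumiRecurrence u)
    (hv : SatisfiesNarumiRecurrence v) : u = v := by
  funext n
  induction n with
  | zero => funext l; rw [hu.zero_left, hv.zero_left]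
  | succ n ihn =>
    funext l
    induction l with
    | zero => rw [hu.zero_right, hv.zero_right]
    | succ j ihj =>
      have hpos : (n + j + 1 : ℚ) ≠ 0 := by positivity
      have h := hu.succ_succ n j
      rw [congrFun ihn (j + 1), ← hv.succ_succ n j, ihj] at h
      simpa using mul_left_cancel₀ hpos h

theorem satisfiesNarumiRecurrence_LtS :
    SatisfiesNarumiRecurrence fun n l => (n + l) * coeff l (LtS ^ n) where
  zero_left l := by cases l <;> simp
  zero_right n := by simp [constantCoeff_LtS]
  succ_succ n j := by
    have h := congrArg (coeff (j + 1)) (one_add_X_mul_X_mul_derivative_LtS_pow_add n)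
    rw [add_mul, one_mul, map_add, coeff_succ_X_mul, coeff_X_mul_derivative_add_natCast_mul,
      coeff_X_mul_derivative_add_natCast_mul, coeff_natCast_mul] at h
    push_cast at h ⊢
    linear_combination (n + j + 1 : ℚ) * h

theorem satisfiesNarumiRecurrence_inv_ebt_one :
    SatisfiesNarumiRecurrence fun n l => n * coeff l ((ebt 1)⁻¹ ^ (n + l)) where
  zero_left l := by simp
  zero_right n := by simp [constantCoeff_ebt_one]
  succ_succ n j := by
    have h := congrArg (coeff (j + 1)) (X_mul_derivative_inv_ebt_one_pow (n + j))
    rw [coeff_X_mul_derivative, coeff_natCast_mul, sub_mul, one_mul, map_sub, map_sub, coeff_succ_X_mul] at h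
    rw [show n + 1 + (j + 1) = n + j + 2 by ring, show n + 1 + j = n + j + 1 by ring,
      show n + (j + 1) = n + j + 1 by ring]
    push_cast at h ⊢
    linear_combination (n + 1 : ℚ) * h

theorem Bnum_natCast (m l : ℕ) : Bnum m l = l ! * coeff l ((ebt 1)⁻¹ ^ m) := by
  rw [Bnum, Bpol, rescale_zero_apply, expS, constantCoeff_exp, map_one, mul_one]
  rfl

theorem stmt3 (n : ℕ) (hn : 1 ≤ n) :
    LtS ^ n = PowerSeries.mk (fun l =>
      (n : ℚ) * (Bnum ((n : ℤ) + l) l / ((n : ℚ) + l)) / l !) := by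
  ext l
  have hcoeff := congrFun₂
    (satisfiesNarumiRecurrence_LtS.unique satisfiesNarumiRecurrence_inv_ebt_one) n l
  have hnl : (n + l : ℚ) ≠ 0 := by positivity
  rw [coeff_mk, ← Nat.cast_add, Bnum_natCast]
  field_simp
  linear_combination hcoeff
end

section
/- For every n ≥ 1, 0 ≤ l ≤ n-1, and any c, the Narumi polynomial of order n satisfies N_l^{(n)}(-cn) = l! · ∑_{k=0}^{l} (n!/(n+k)!) S₁(k+n, n) · C(-nc, l-k), where S₁ is the signed Stirling number of the first kind and C(-nc, l-k) = (-nc)(-nc-1)⋯(-nc-(l-k)+1)/(l-k)! is the generalized binomial coefficient. -/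
open PowerSeries Nat

/-!
`log(1+t)^n / n!` is the exponential generating function of `S₁(·, n)`: since
`(1+t) · d/dt log(1+t) = 1`, comparing coefficients in
`(1+t) · d/dt log(1+t)^(n+1) = (n+1) log(1+t)^n` gives exactly the Stirling recurrence.
Dividing by `t^n` gives the coefficients of `(log(1+t)/t)^n`, and the formula is the Cauchy
product of this series with `(1+t)^x = ∑ C(x, m) t^m`.
-/

lemma logS_eq_X_mul_LtS : logS = X * LtS := by
  ext (_ | m)
  · simp [logS, LtS]
  · rw [coeff_succ_X_mul, logS, LtS]
    simp only [coeff_mk, Nat.succ_ne_zero, if_false]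
    push_cast
    ring

lemma constantCoeff_logS : constantCoeff logS = 0 := by
  simp [logS, ← coeff_zero_eq_constantCoeff_apply]

lemma one_add_X_mul_derivative_logS : (1 + X) * derivative ℚ logS = 1 := by
  ext (_ | m)
  · simp [← coeff_zero_eq_constantCoeff_apply (derivative ℚ _), coeff_derivative, logS]
  · rw [add_mul, one_mul, map_add, coeff_succ_X_mul, coeff_derivative, coeff_derivative, logS]
    simp only [coeff_mk, coeff_one, Nat.succ_ne_zero, if_false]
    field_simp
    push_cast
    ring

lemma one_add_X_mul_derivative_logS_pow (n : ℕ) :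
    (1 + X) * derivative ℚ (logS ^ (n + 1)) = ((n : ℚ) + 1) • logS ^ n := by
  rw [Derivation.leibniz_pow, Nat.add_sub_cancel, smul_eq_mul, ← Nat.cast_smul_eq_nsmul ℚ,
    mul_smul_comm, mul_comm (logS ^ n), ← mul_assoc, one_add_X_mul_derivative_logS, one_mul]
  push_cast
  rfl

lemma coeff_one_add_X_mul_derivative {R : Type*} [CommRing R] (f : R⟦X⟧) (m : ℕ) :
    coeff m ((1 + X) * derivative R f) = coeff (m + 1) f * (m + 1) + coeff m f * m := by
  rcases m with _ | m
  · simp [← coeff_zero_eq_constantCoeff_apply (derivative R _), coeff_derivative]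
  · rw [add_mul, one_mul, map_add, coeff_succ_X_mul, coeff_derivative, coeff_derivative]
    push_cast
    ring

lemma coeff_logS_pow_mul_factorial (n m : ℕ) :
    coeff m (logS ^ n) * m ! = n ! * S1 m n := by
  induction n generalizing m with
  | zero => rcases m with _ | m <;> simp [S1, coeff_one]
  | succ n ih =>
    induction m with
    | zero => simp [S1, coeff_zero_eq_constantCoeff, constantCoeff_logS]
    | succ m ihm =>
      have hrec := congrArg (coeff m) (one_add_X_mul_derivative_logS_pow n)
      rw [coeff_one_add_X_mul_derivative, map_smul, smul_eq_mul] at hrec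
      have hS1 : S1 (m + 1) (n + 1) = S1 m n - m * S1 m (n + 1) := rfl
      rw [Nat.factorial_succ n] at ihm
      rw [hS1, Nat.factorial_succ, Nat.factorial_succ n]
      push_cast at ihm ⊢
      linear_combination (m ! : ℚ) * hrec + ((n : ℚ) + 1) * ih m - (m : ℚ) * ihm

lemma coeff_LtS_pow (n k : ℕ) :
    coeff k (LtS ^ n) = n ! * S1 (k + n) n / (k + n)! := by
  rw [eq_div_iff (by positivity), ← coeff_logS_pow_mul_factorial, logS_eq_X_mul_LtS, mul_pow,
    coeff_X_pow_mul]

theorem stmt9_general (n : ℕ) (l : ℕ) (c : ℚ) :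
    Npol (n : ℤ) (-(c * n)) l =
      l ! * ∑ k ∈ Finset.range (l + 1),
        (n ! : ℚ) / (n + k)! * S1 (k + n) n * gchoose (-((n : ℚ) * c)) (l - k) := by
  have hzp : zp LtS n = LtS ^ n := rfl
  rw [Npol, hzp, coeff_mul, Finset.Nat.sum_antidiagonal_eq_sum_range_succ_mk]
  congr 1
  refine Finset.sum_congr rfl fun k _ => ?_
  rw [coeff_LtS_pow, onePlusPow, coeff_mk, gchoose, mul_comm c, add_comm k n]
  ring

theorem stmt9 (n : ℕ) (hn : 1 ≤ n) (l : ℕ) (hl : l < n) (c : ℚ) :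
    Npol (n : ℤ) (-(c * n)) l =
      l ! * ∑ k ∈ Finset.range (l + 1),
        (n ! : ℚ) / (n + k)! * S1 (k + n) n * gchoose (-((n : ℚ) * c)) (l - k) :=
  stmt9_general n l c
end

section
/- Let α be a positive integer and define Euler polynomials of order α by (2/(e^t+1))^α e^{xt} = ∑_{n≥0} E_n^{(α)}(x) t^n/n!, and Narumi numbers by (log(1+t)/t)^n = ∑_{l≥0} N_l^{(n)} t^l/l!. For n ≥ 1, the polynomial Sₙ(x) := (2/(e^t+1))^α · x · (log(1+t)/t)^n x^{n-1} (operator formula, with power series in t acting as differential operators on polynomials) satisfies Sₙ(x) = ∑_{l=0}^{n-1} C(n-1,l) N_l^{(n)} E_{n-l}^{(α)}(x). -/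
open PowerSeries Nat

/-!
The operator `f(t)` is linear on `ℚ[x]`, and `f(t) x^m` is the `m`-th coefficient polynomial of
`f(t) e^{xt}`. Since `x · g(t) x^m = ∑_l C(m,l) (l! g_l) x^{m+1-l}`, applying `f(t)` termwise gives
the identity; for `g = (log(1+t)/t)^n` the numbers `l! g_l` are the Narumi numbers.
-/

lemma act_eq_sum_range (f : PowerSeries ℚ) {p : Polynomial ℚ} {N : ℕ} (h : p.natDegree < N) :
    act f p = ∑ k ∈ Finset.range N, coeff k f • (⇑Polynomial.derivative)^[k] p := by
  refine Finset.sum_subset (Finset.range_subset_range.mpr h) fun k _ hk => ?_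
  rw [Polynomial.iterate_derivative_eq_zero (by simp at hk; omega), smul_zero]

lemma act_add (f : PowerSeries ℚ) (p q : Polynomial ℚ) :
    act f (p + q) = act f p + act f q := by
  have hp : p.natDegree < max p.natDegree q.natDegree + 1 := by omega
  have hq : q.natDegree < max p.natDegree q.natDegree + 1 := by omega
  have hpq := Nat.lt_succ_of_le (Polynomial.natDegree_add_le p q)
  rw [act_eq_sum_range f hp, act_eq_sum_range f hq, act_eq_sum_range f hpq,
    ← Finset.sum_add_distrib]
  refine Finset.sum_congr rfl fun k _ => ?_
  rw [iterate_map_add, smul_add]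

lemma act_smul (f : PowerSeries ℚ) (c : ℚ) (p : Polynomial ℚ) :
    act f (c • p) = c • act f p := by
  rw [act_eq_sum_range f (Nat.lt_succ_of_le (Polynomial.natDegree_smul_le c p)), act,
    Finset.smul_sum]
  refine Finset.sum_congr rfl fun k _ => ?_
  rw [Polynomial.iterate_derivative_smul, smul_comm]

@[simps]
noncomputable def actLinear (f : PowerSeries ℚ) : Polynomial ℚ →ₗ[ℚ] Polynomial ℚ where
  toFun := act f
  map_add' := act_add f
  map_smul' := act_smul f

lemma act_X_pow (f : PowerSeries ℚ) (m : ℕ) :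
    act f (Polynomial.X ^ m) = ∑ k ∈ Finset.range (m + 1),
      (coeff k f * m.descFactorial k) • Polynomial.X ^ (m - k) := by
  rw [act, Polynomial.natDegree_X_pow]
  refine Finset.sum_congr rfl fun k _ => ?_
  rw [Polynomial.iterate_derivative_X_pow_eq_smul, smul_smul]

lemma polyOf_eq_act_X_pow (f : PowerSeries ℚ) (m : ℕ) :
    polyOf f m = act f (Polynomial.X ^ m) := by
  rw [act_X_pow, polyOf, expPoly, coeff_mul, Finset.Nat.sum_antidiagonal_eq_sum_range_succ_mk,
    Finset.smul_sum]
  refine Finset.sum_congr rfl fun k hk => ?_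
  have hkm : k ≤ m := Nat.lt_succ_iff.mp (Finset.mem_range.mp hk)
  have hfact : ((m - k)! : ℚ) * m.descFactorial k = m ! := by
    rw [← Nat.cast_mul, Nat.factorial_mul_descFactorial hkm]
  rw [coeff_map, coeff_mk, Polynomial.smul_eq_C_mul, Polynomial.smul_eq_C_mul,
    Polynomial.smul_eq_C_mul, ← mul_assoc, ← map_mul, ← mul_assoc, ← map_mul]
  congr 2
  field_simp
  linear_combination (-coeff k f) * hfact

lemma X_mul_act_X_pow (g : PowerSeries ℚ) (m : ℕ) :
    Polynomial.X * act g (Polynomial.X ^ m) = ∑ l ∈ Finset.range (m + 1),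
      (coeff l g * m.descFactorial l) • Polynomial.X ^ (m + 1 - l) := by
  rw [act_X_pow, Finset.mul_sum]
  refine Finset.sum_congr rfl fun l hl => ?_
  have hlm : l ≤ m := Nat.lt_succ_iff.mp (Finset.mem_range.mp hl)
  rw [mul_smul_comm, ← _root_.pow_succ', Nat.sub_add_comm hlm]

lemma act_X_mul_act_X_pow (f g : PowerSeries ℚ) (m : ℕ) :
    act f (Polynomial.X * act g (Polynomial.X ^ m)) = ∑ l ∈ Finset.range (m + 1),
      ((m.choose l : ℚ) * (l ! * coeff l g)) • polyOf f (m + 1 - l) := by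
  change actLinear f _ = _
  rw [X_mul_act_X_pow, map_sum]
  refine Finset.sum_congr rfl fun l _ => ?_
  rw [map_smul, actLinear_apply, ← polyOf_eq_act_X_pow,
    Nat.descFactorial_eq_factorial_mul_choose]
  push_cast
  congr 1
  ring

theorem stmt13_general (α : ℕ) (n : ℕ) (hn : 1 ≤ n) :
    act (Eser α) (Polynomial.X * act (LtS ^ n) (Polynomial.X ^ (n - 1))) =
      ∑ l ∈ Finset.range n, (((n - 1).choose l : ℚ) * Nnum n l) • Epol α (n - l) := by
  obtain ⟨m, rfl⟩ : ∃ m, n = m + 1 := ⟨n - 1, (Nat.succ_pred_eq_of_pos hn).symm⟩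
  rw [Nat.add_sub_cancel, act_X_mul_act_X_pow]
  rfl

theorem stmt13 (α : ℕ) (hα : 0 < α) (n : ℕ) (hn : 1 ≤ n) :
    act (Eser α) (Polynomial.X * act (LtS ^ n) (Polynomial.X ^ (n - 1))) =
      ∑ l ∈ Finset.range n, (((n - 1).choose l : ℚ) * Nnum n l) • Epol α (n - l) :=
  stmt13_general α n hn
end
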